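/- arXiv:1612.05845 — 7 statements merged into one kernel-verified Lean document; each statement's English description precedes it below -/
import Mathlib

section
/- Let X take values in a finite set 𝒳 of cardinality m ≥ 1, Y discrete, and 1 ≤ α ≤ 2. Define I_α(X;Y) = Σ_{x,y} P_X(x)P_Y(y) |P_{XY}(x,y)/(P_X(x)P_Y(y)) − 1|^α. Then I_α(X;Y) ≤ ((m−1)/m)·((m−1)^{α−1} + 1), and in particular I_α(X;Y) < 1 + m^{α−1}. -/
/-!
Fix `x`, put `p = P_X(x)` and `r_y = P_{XY}(x,y) / P_Y(y) ∈ [0,1]`. The `(x,y)` term equals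
`P_Y(y) p^{1-α} |r_y - p|^α`, and convexity of `t ↦ |t - p|^α` bounds `|r - p|^α` by the chord
`(1-r) p^α + r (1-p)^α`. Since `Σ_y P_Y(y) r_y = p`, the inner sum is at most
`p^{2-α}(1-p)^α + p(1-p)`.

Writing `p^{2-α}(1-p)^α = (p(1-p))^{2-α} ((1-p)^2)^{α-1}`, weighted AM–GM taken at the point
where `(1-p)^2 = (m-1) p(1-p)` (i.e. `p = 1/m`) bounds it linearly in `p(1-p)` and `(1-p)^2`.
With `A = Σ p(1-p) ≤ (m-1)/m` (Cauchy–Schwarz) and `Σ (1-p)^2 = m-1-A`, the total bound is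
affine in `A` with nonnegative slope, so it is largest at `A = (m-1)/m`, the uniform case.
-/

open Finset Function MeasureTheory

theorem abs_sub_rpow_le_chord {p r α : ℝ} (hp0 : 0 ≤ p) (hp1 : p ≤ 1) (hr0 : 0 ≤ r) (hr1 : r ≤ 1)
    (hα : 1 ≤ α) : |r - p| ^ α ≤ (1 - r) * p ^ α + r * (1 - p) ^ α := by
  have habs : |r - p| ≤ (1 - r) * p + r * (1 - p) := abs_le.2 ⟨by nlinarith, by nlinarith⟩
  calc |r - p| ^ α ≤ ((1 - r) * p + r * (1 - p)) ^ α :=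
        Real.rpow_le_rpow (abs_nonneg _) habs (by linarith)
    _ ≤ (1 - r) * p ^ α + r * (1 - p) ^ α :=
        (convexOn_rpow hα).2 (Set.mem_Ici.2 hp0) (Set.mem_Ici.2 (by linarith))
          (by linarith) hr0 (by ring)

theorem mul_abs_div_sub_one_rpow_le {p q a α : ℝ} (hp0 : 0 < p) (hp1 : p ≤ 1) (ha0 : 0 ≤ a)
    (haq : a ≤ q) (hα : 1 ≤ α) :
    p * q * |a / (p * q) - 1| ^ α ≤ a * p ^ (1 - α) * (1 - p) ^ α + (q - a) * p := by
  rcases (ha0.trans haq).eq_or_lt with rfl | hq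
  · obtain rfl : a = 0 := le_antisymm haq ha0
    simp
  have hr0 : 0 ≤ a / q := div_nonneg ha0 hq.le
  have hr1 : a / q ≤ 1 := (div_le_one hq).2 haq
  have hpp : p ^ (1 - α) * p ^ α = p := by
    rw [← Real.rpow_add hp0, sub_add_cancel, Real.rpow_one]
  have hsplit : p * q * |a / (p * q) - 1| ^ α = q * p ^ (1 - α) * |a / q - p| ^ α := by
    rw [show a / (p * q) - 1 = (a / q - p) / p by field_simp, abs_div, abs_of_pos hp0,
      Real.div_rpow (abs_nonneg _) hp0.le]
    nth_rewrite 1 [← hpp]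
    field_simp
  calc p * q * |a / (p * q) - 1| ^ α = q * p ^ (1 - α) * |a / q - p| ^ α := hsplit
    _ ≤ q * p ^ (1 - α) * ((1 - a / q) * p ^ α + a / q * (1 - p) ^ α) :=
        mul_le_mul_of_nonneg_left (abs_sub_rpow_le_chord hp0.le hp1 hr0 hr1 hα) (by positivity)
    _ = a * p ^ (1 - α) * (1 - p) ^ α + (q - a) * (p ^ (1 - α) * p ^ α) := by
        field_simp; ring
    _ = a * p ^ (1 - α) * (1 - p) ^ α + (q - a) * p := by rw [hpp]

theorem tsum_mul_abs_div_sub_one_rpow_le {𝒴 : Type*} {p α : ℝ} {q a : 𝒴 → ℝ}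
    (hq : HasSum q 1) (ha : HasSum a p) (ha0 : ∀ y, 0 ≤ a y) (haq : ∀ y, a y ≤ q y)
    (hp0 : 0 < p) (hp1 : p ≤ 1) (hα : 1 ≤ α) :
    ∑' y, p * q y * |a y / (p * q y) - 1| ^ α ≤ p ^ (2 - α) * (1 - p) ^ α + p * (1 - p) := by
  have hle : ∀ y, p * q y * |a y / (p * q y) - 1| ^ α
      ≤ a y * p ^ (1 - α) * (1 - p) ^ α + (q y - a y) * p :=
    fun y => mul_abs_div_sub_one_rpow_le hp0 hp1 (ha0 y) (haq y) hα
  have hbound : HasSum (fun y => a y * p ^ (1 - α) * (1 - p) ^ α + (q y - a y) * p)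
      (p * p ^ (1 - α) * (1 - p) ^ α + (1 - p) * p) :=
    ((ha.mul_right _).mul_right _).add ((hq.sub ha).mul_right p)
  have hnonneg : ∀ y, 0 ≤ p * q y * |a y / (p * q y) - 1| ^ α := fun y =>
    mul_nonneg (mul_nonneg hp0.le ((ha0 y).trans (haq y))) (by positivity)
  calc ∑' y, p * q y * |a y / (p * q y) - 1| ^ α
      ≤ p * p ^ (1 - α) * (1 - p) ^ α + (1 - p) * p :=
        hbound.tsum_eq ▸ (Summable.of_nonneg_of_le hnonneg hle hbound.summable).tsum_le_tsum
          hle hbound.summable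
    _ = p ^ (2 - α) * (1 - p) ^ α + p * (1 - p) := by
        rw [show 2 - α = 1 + (1 - α) by ring, Real.rpow_add hp0, Real.rpow_one]; ring

theorem rpow_one_sub_mul_rpow_le {u v d w : ℝ} (hu : 0 ≤ u) (hv : 0 ≤ v) (hd : 0 < d)
    (hw0 : 0 ≤ w) (hw1 : w ≤ 1) :
    u ^ (1 - w) * v ^ w ≤ d ^ w * ((1 - w) * u + w * (v / d)) := by
  have amgm := Real.geom_mean_le_arith_mean2_weighted (sub_nonneg.2 hw1) hw0 hu
    (div_nonneg hv hd.le) (sub_add_cancel 1 w)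
  calc u ^ (1 - w) * v ^ w = d ^ w * (u ^ (1 - w) * (v / d) ^ w) := by
        rw [Real.div_rpow hv hd.le]; field_simp
    _ ≤ d ^ w * ((1 - w) * u + w * (v / d)) := by gcongr

theorem rpow_two_sub_mul_one_sub_rpow_le {p d α : ℝ} (hp0 : 0 ≤ p) (hp1 : p ≤ 1) (hd : 0 < d)
    (hα1 : 1 ≤ α) (hα2 : α ≤ 2) :
    p ^ (2 - α) * (1 - p) ^ α
      ≤ d ^ (α - 1) * ((2 - α) * (p * (1 - p)) + (α - 1) * ((1 - p) ^ 2 / d)) := by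
  have hq : 0 ≤ 1 - p := sub_nonneg.2 hp1
  have hfactor : (p * (1 - p)) ^ (2 - α) * ((1 - p) ^ 2) ^ (α - 1)
      = p ^ (2 - α) * (1 - p) ^ α := by
    rw [Real.mul_rpow hp0 hq, ← Real.rpow_natCast, ← Real.rpow_mul hq, mul_assoc,
      ← Real.rpow_add' hq (by push_cast; linarith)]
    congr 2
    push_cast; ring
  have h := rpow_one_sub_mul_rpow_le (mul_nonneg hp0 hq) (sq_nonneg (1 - p)) hd
    (sub_nonneg.2 hα1) (by linarith : α - 1 ≤ 1)
  rwa [show 1 - (α - 1) = 2 - α by ring, hfactor] at h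

theorem card_mul_sum_mul_one_sub_le {ι : Type*} [Fintype ι] {p : ι → ℝ} (hsum : ∑ i, p i = 1) :
    Fintype.card ι * ∑ i, p i * (1 - p i) ≤ Fintype.card ι - 1 := by
  have hcs := sq_sum_le_card_mul_sum_sq (s := univ) (f := p)
  simp only [hsum, card_univ] at hcs
  simp only [mul_one_sub, sum_sub_distrib, hsum, ← sq]
  nlinarith

theorem sum_one_sub_sq {ι : Type*} [Fintype ι] {p : ι → ℝ} (hsum : ∑ i, p i = 1) :
    ∑ i, (1 - p i) ^ 2 = Fintype.card ι - 1 - ∑ i, p i * (1 - p i) := by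
  simp only [show ∀ i, (1 - p i) ^ 2 = 1 - p i - p i * (1 - p i) from fun i => by ring,
    sum_sub_distrib, hsum, sum_const, card_univ, nsmul_eq_mul, mul_one]

theorem tangent_bound_le {n T A α : ℝ} (hn : 2 ≤ n) (hT0 : 0 ≤ T) (hT : T ≤ n - 1)
    (hA : n * A ≤ n - 1) (hα2 : α ≤ 2) :
    T * ((2 - α) * A + (α - 1) * ((n - 1 - A) / (n - 1))) + A ≤ (n - 1) / n * (T + 1) := by
  have hd : 0 < n - 1 := by linarith
  set c := T * (2 - α) - T * (α - 1) / (n - 1) + 1 with hc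
  have hc0 : 0 ≤ c := by
    have : T * (α - 1) / (n - 1) ≤ 1 := by
      rw [div_le_one hd]; nlinarith
    nlinarith
  calc T * ((2 - α) * A + (α - 1) * ((n - 1 - A) / (n - 1))) + A = T * (α - 1) + c * A := by
        rw [hc]; field_simp; ring
    _ ≤ T * (α - 1) + c * ((n - 1) / n) := by
        gcongr; rw [le_div_iff₀ (by linarith)]; linarith
    _ = (n - 1) / n * (T + 1) := by rw [hc]; field_simp; ring

theorem sum_rpow_two_sub_mul_one_sub_rpow_add_le {ι : Type*} [Fintype ι] {p : ι → ℝ}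
    (hp0 : ∀ i, 0 ≤ p i) (hsum : ∑ i, p i = 1) {α : ℝ} (hα1 : 1 ≤ α) (hα2 : α ≤ 2) :
    ∑ i, (p i ^ (2 - α) * (1 - p i) ^ α + p i * (1 - p i))
      ≤ ((Fintype.card ι : ℝ) - 1) / Fintype.card ι
        * (((Fintype.card ι : ℝ) - 1) ^ (α - 1) + 1) := by
  have hp1 : ∀ i, p i ≤ 1 := fun i =>
    hsum ▸ single_le_sum (fun j _ => hp0 j) (mem_univ i)
  rcases Nat.lt_or_ge (Fintype.card ι) 2 with hcard | hcard
  · have : Subsingleton ι := Fintype.card_le_one_iff_subsingleton.1 (by omega)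
    have hp : ∀ i, p i = 1 := fun i => by rw [← hsum, Fintype.sum_subsingleton _ i]
    have hfrac : ((Fintype.card ι : ℝ) - 1) / Fintype.card ι = 0 := by
      interval_cases Fintype.card ι <;> simp
    simp [hp, hfrac, Real.zero_rpow (by linarith : α ≠ 0)]
  set n : ℝ := (Fintype.card ι : ℝ)
  set A := ∑ i, p i * (1 - p i)
  have hn : (2 : ℝ) ≤ n := by simp only [n]; exact_mod_cast hcard
  have hd : 0 < n - 1 := by linarith
  set T := (n - 1) ^ (α - 1)
  have hT : T ≤ n - 1 := by
    simpa using Real.rpow_le_rpow_of_exponent_le (by linarith : 1 ≤ n - 1)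
      (by linarith : α - 1 ≤ 1)
  calc ∑ i, (p i ^ (2 - α) * (1 - p i) ^ α + p i * (1 - p i))
      ≤ ∑ i, (T * ((2 - α) * (p i * (1 - p i)) + (α - 1) * ((1 - p i) ^ 2 / (n - 1)))
          + p i * (1 - p i)) :=
        sum_le_sum fun i _ =>
          add_le_add_left (rpow_two_sub_mul_one_sub_rpow_le (hp0 i) (hp1 i) hd hα1 hα2) _
    _ = T * ((2 - α) * A + (α - 1) * ((∑ i, (1 - p i) ^ 2) / (n - 1))) + A := by
        simp only [sum_add_distrib, ← mul_sum, ← sum_div, A]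
    _ = T * ((2 - α) * A + (α - 1) * ((n - 1 - A) / (n - 1))) + A := by
        rw [sum_one_sub_sq hsum]
    _ ≤ (n - 1) / n * (T + 1) :=
        tangent_bound_le hn (by positivity) hT (card_mul_sum_mul_one_sub_le hsum) hα2

theorem div_mul_rpow_add_one_lt {n α : ℝ} (hn : 1 ≤ n) (hα : 1 ≤ α) :
    (n - 1) / n * ((n - 1) ^ (α - 1) + 1) < 1 + n ^ (α - 1) := by
  have hT : (n - 1) ^ (α - 1) ≤ n ^ (α - 1) :=
    Real.rpow_le_rpow (by linarith) (by linarith) (by linarith)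
  have hfrac : (n - 1) / n < 1 := (div_lt_one (by linarith)).2 (by linarith)
  have hpos : 0 < (n - 1) ^ (α - 1) + 1 := by
    have := Real.rpow_nonneg (by linarith : 0 ≤ n - 1) (α - 1); linarith
  nlinarith

theorem hasSum_measure_inter_preimage_singleton_toReal {Ω 𝒴 : Type*} [MeasurableSpace Ω]
    [MeasurableSpace 𝒴] [Countable 𝒴] [MeasurableSingletonClass 𝒴] (μ : Measure Ω)
    [IsFiniteMeasure μ] {Y : Ω → 𝒴} (hY : Measurable Y) {s : Set Ω} (hs : MeasurableSet s) :
    HasSum (fun y => (μ (s ∩ Y ⁻¹' {y})).toReal) (μ s).toReal := by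
  have hdisj : Pairwise (Disjoint on fun y => s ∩ Y ⁻¹' {y}) := fun y z hyz =>
    ((pairwise_disjoint_fiber Y) hyz).mono Set.inter_subset_right Set.inter_subset_right
  have hμ : ∑' y, μ (s ∩ Y ⁻¹' {y}) = μ s := by
    rw [← measure_iUnion hdisj fun y => hs.inter (hY (measurableSet_singleton y)),
      ← Set.inter_iUnion, ← Set.preimage_iUnion, Set.iUnion_of_singleton, Set.preimage_univ,
      Set.inter_univ]
  rw [← hμ, ENNReal.tsum_toReal_eq fun _ => measure_ne_top μ _]
  exact ENNReal.hasSum_toReal (hμ ▸ measure_ne_top μ s)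

theorem hasSum_measure_preimage_singleton_toReal {Ω 𝒴 : Type*} [MeasurableSpace Ω]
    [MeasurableSpace 𝒴] [Countable 𝒴] [MeasurableSingletonClass 𝒴] (μ : Measure Ω)
    [IsProbabilityMeasure μ] {Y : Ω → 𝒴} (hY : Measurable Y) :
    HasSum (fun y => (μ (Y ⁻¹' {y})).toReal) 1 := by
  simpa using hasSum_measure_inter_preimage_singleton_toReal μ hY MeasurableSet.univ

/-- Bound on the α-dependence measure
`I_α(X;Y) = Σ_{x,y} P_X(x)P_Y(y) |P_{XY}(x,y)/(P_X(x)P_Y(y)) − 1|^α` for `1 ≤ α ≤ 2`: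
`I_α(X;Y) ≤ ((m−1)/m)((m−1)^{α−1} + 1) < 1 + m^{α−1}` where `m = |𝒳|`. -/
theorem stmt7 {𝒳 𝒴 : Type*} [Fintype 𝒳] [Nonempty 𝒳] [Countable 𝒴] [MeasurableSpace 𝒳]
    [MeasurableSpace 𝒴] [MeasurableSingletonClass 𝒳] [MeasurableSingletonClass 𝒴]
    {Ω : Type*} [MeasurableSpace Ω] (μ : MeasureTheory.Measure Ω)
    [MeasureTheory.IsProbabilityMeasure μ]
    (X : Ω → 𝒳) (Y : Ω → 𝒴) (hX : Measurable X) (hY : Measurable Y)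
    (pXY : 𝒳 → 𝒴 → ℝ) (pX : 𝒳 → ℝ) (pY : 𝒴 → ℝ)
    (hpXY : ∀ x y, pXY x y = (μ {ω | X ω = x ∧ Y ω = y}).toReal)
    (hpX : ∀ x, pX x = (μ {ω | X ω = x}).toReal)
    (hpY : ∀ y, pY y = (μ {ω | Y ω = y}).toReal)
    (hpXpos : ∀ x, 0 < pX x)
    (α : ℝ) (hα1 : 1 ≤ α) (hα2 : α ≤ 2) (m : ℕ) (hm : m = Fintype.card 𝒳) :
    (∑ x : 𝒳, ∑' y : 𝒴, pX x * pY y * |pXY x y / (pX x * pY y) - 1| ^ α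
        ≤ ((m : ℝ) - 1) / m * (((m : ℝ) - 1) ^ (α - 1) + 1)) ∧
      ∑ x : 𝒳, ∑' y : 𝒴, pX x * pY y * |pXY x y / (pX x * pY y) - 1| ^ α
        < 1 + (m : ℝ) ^ (α - 1) := by
  have hpY_sum : HasSum pY 1 := by
    rw [show pY = _ from funext hpY]
    exact hasSum_measure_preimage_singleton_toReal μ hY
  have hpXY_sum : ∀ x, HasSum (pXY x) (pX x) := fun x => by
    rw [show pXY x = _ from funext (hpXY x), hpX]
    exact hasSum_measure_inter_preimage_singleton_toReal μ hY (hX (measurableSet_singleton x))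
  have hpX_sum : ∑ x, pX x = 1 := by
    rw [show pX = _ from funext hpX, ← (hasSum_measure_preimage_singleton_toReal μ hX).tsum_eq,
      tsum_fintype]
    rfl
  have hpXY_le : ∀ x y, pXY x y ≤ pY y := fun x y => by
    rw [hpXY, hpY]
    exact ENNReal.toReal_mono (measure_ne_top μ _) (measure_mono fun ω hω => hω.2)
  have hbound : ∑ x : 𝒳, ∑' y : 𝒴, pX x * pY y * |pXY x y / (pX x * pY y) - 1| ^ α
      ≤ ((m : ℝ) - 1) / m * (((m : ℝ) - 1) ^ (α - 1) + 1) := by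
    subst hm
    calc _ ≤ ∑ x, (pX x ^ (2 - α) * (1 - pX x) ^ α + pX x * (1 - pX x)) :=
          sum_le_sum fun x _ => tsum_mul_abs_div_sub_one_rpow_le hpY_sum (hpXY_sum x)
            (fun y => hpXY x y ▸ ENNReal.toReal_nonneg) (hpXY_le x) (hpXpos x)
            (hpX_sum ▸ single_le_sum (fun x _ => (hpXpos x).le) (mem_univ x)) hα1
      _ ≤ _ := sum_rpow_two_sub_mul_one_sub_rpow_add_le (fun x => (hpXpos x).le) hpX_sum hα1 hα2
  refine ⟨hbound, hbound.trans_lt (div_mul_rpow_add_one_lt ?_ hα1)⟩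
  rw [hm]
  exact_mod_cast Fintype.card_pos
end

section
/- For any m ≥ 2 and 1 ≤ α ≤ 2, the real function g(t) = t^{2−α}(1−t)^α − t² − [ (2(m−1)^α − 2)/m − α(m−1)^{α−1} ](t − 1/m) − ((m−1)^α − 1)/m² satisfies g(t) ≤ 0 for all t ∈ [0,1]. -/
/-! With `B = (m-1)^(α-2)`, weighted AM-GM applied to `t` and `(1-t)/(m-1)` bounds
`t^(2-α)(1-t)^α` by the quadratic `(α-1)B(1-t)² + (2-α)B(m-1)t(1-t)`, which touches it at
`t = 1/m`. Subtracting the remaining terms of `g` from this quadratic leaves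
`((α-1)B - (2-α)B(m-1) - 1)(t - 1/m)²`, whose leading coefficient is `≤ 0` since `B ≤ 1`. -/

open Real

theorem rpow_two_sub_mul_rpow_le {x y c α : ℝ} (hx : 0 ≤ x) (hy : 0 ≤ y) (hc : 0 < c)
    (hα1 : 1 ≤ α) (hα2 : α ≤ 2) :
    x ^ (2 - α) * y ^ α
      ≤ (α - 1) * c ^ (α - 2) * y ^ 2 + (2 - α) * c ^ (α - 1) * (x * y) := by
  have amgm := geom_mean_le_arith_mean2_weighted (by linarith : 0 ≤ α - 1)
    (by linarith : 0 ≤ 2 - α) (div_nonneg hy hc.le) hx (by ring)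
  have hcα : 0 ≤ c ^ (α - 1) := rpow_nonneg hc.le _
  have hyα : y ^ α = y ^ (α - 1) * y := by
    rw [← rpow_add_one' hy (by linarith), sub_add_cancel]
  have hcα2 : c ^ (α - 2) = c ^ (α - 1) / c := by
    rw [← rpow_sub_one hc.ne', sub_sub, one_add_one_eq_two]
  calc x ^ (2 - α) * y ^ α
      = (y / c) ^ (α - 1) * x ^ (2 - α) * (c ^ (α - 1) * y) := by
        rw [div_rpow hy hc.le, hyα]
        field_simp
    _ ≤ ((α - 1) * (y / c) + (2 - α) * x) * (c ^ (α - 1) * y) :=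
        mul_le_mul_of_nonneg_right amgm (mul_nonneg hcα hy)
    _ = _ := by
        rw [hcα2]
        field_simp

theorem tangent_quadratic_sub_eq {m α B t : ℝ} (hm : m ≠ 0) :
    (α - 1) * B * (1 - t) ^ 2 + (2 - α) * (B * (m - 1)) * (t * (1 - t)) - t ^ 2
      - ((2 * (B * (m - 1) ^ 2) - 2) / m - α * (B * (m - 1))) * (t - 1 / m)
      - (B * (m - 1) ^ 2 - 1) / m ^ 2
      = ((α - 1) * B - (2 - α) * B * (m - 1) - 1) * (t - 1 / m) ^ 2 := by
  field_simp
  ring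

/-- For `m ≥ 2` and `1 ≤ α ≤ 2`, the function
`g(t) = t^{2−α}(1−t)^α − t² − [(2(m−1)^α − 2)/m − α(m−1)^{α−1}](t − 1/m) − ((m−1)^α − 1)/m²`
is nonpositive on `[0,1]` (real powers, with the convention `0^0 = 1`). -/
theorem stmt8 (m α : ℝ) (hm : 2 ≤ m) (hα1 : 1 ≤ α) (hα2 : α ≤ 2) :
    ∀ t ∈ Set.Icc (0 : ℝ) 1,
      t ^ (2 - α) * (1 - t) ^ α - t ^ 2
        - ((2 * (m - 1) ^ α - 2) / m - α * (m - 1) ^ (α - 1)) * (t - 1 / m)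
        - ((m - 1) ^ α - 1) / m ^ 2 ≤ 0 := by
  rintro t ⟨ht0, ht1⟩
  have hc : (0 : ℝ) < m - 1 := by linarith
  set B := (m - 1) ^ (α - 2)
  have hB0 : 0 ≤ B := rpow_nonneg hc.le _
  have hB1 : B ≤ 1 := rpow_le_one_of_one_le_of_nonpos (by linarith) (by linarith)
  have hpow1 : (m - 1) ^ (α - 1) = B * (m - 1) := by
    rw [← rpow_add_one hc.ne']
    ring_nf
  have hpow : (m - 1) ^ α = B * (m - 1) ^ 2 := by
    rw [← rpow_two, ← rpow_add hc]
    ring_nf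
  have hcoeff : (α - 1) * B - (2 - α) * B * (m - 1) - 1 ≤ 0 := by
    nlinarith [mul_nonneg (mul_nonneg (by linarith : (0 : ℝ) ≤ 2 - α) hB0) hc.le]
  have htangent := rpow_two_sub_mul_rpow_le ht0 (sub_nonneg.2 ht1) hc hα1 hα2
  rw [hpow1] at htangent ⊢
  rw [hpow]
  linear_combination htangent + tangent_quadratic_sub_eq (t := t) (α := α) (B := B)
    (by linarith : m ≠ 0) + mul_nonpos_of_nonpos_of_nonneg hcoeff (sq_nonneg (t - 1 / m))
end

section
/- Let p be a probability vector (p₁,…,pₘ) with all pᵢ > 0 and let 1 ≤ α ≤ 2. Then 1 + Σ_{i=1}^m pᵢ²(|1/pᵢ − 1|^α − 1) ≤ ((m−1)/m)·((m−1)^{α−1} + 1), with equality when p is uniform. -/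
open Finset

/-! Writing `x = pᵢ` and `u = 1/x - 1`, the `i`-th term equals `x(1-x) u^(α-1) - x²`.
Since `u ↦ u^(α-1)` is concave, it lies below its tangent at the uniform value `u = m - 1`,
which bounds the sum by an affine, nonincreasing function of `s = Σ pᵢ²`; at `s = 1/m` that
bound is the uniform value, and `s ≥ 1/m` by Cauchy–Schwarz. -/

lemma Real.rpow_le_tangent {β K u : ℝ} (hβ0 : 0 ≤ β) (hβ1 : β ≤ 1) (hK : 0 < K) (hu : 0 ≤ u) :
    u ^ β ≤ (1 - β) * K ^ β + β * K ^ (β - 1) * u := by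
  have hbern := rpow_one_add_le_one_add_mul_self (s := u / K - 1) (by
    have : 0 ≤ u / K := div_nonneg hu hK.le
    linarith) hβ0 hβ1
  rw [add_sub_cancel, Real.div_rpow hu hK.le] at hbern
  have hKβ : 0 < K ^ β := Real.rpow_pos_of_pos hK β
  calc u ^ β = K ^ β * (u ^ β / K ^ β) := by field_simp
    _ ≤ K ^ β * (1 + β * (u / K - 1)) := by gcongr
    _ = (1 - β) * K ^ β + β * K ^ (β - 1) * u := by
      rw [Real.rpow_sub_one hK.ne']
      field_simp
      ring

lemma sq_mul_abs_one_div_sub_one_rpow_le {x α K : ℝ} (hx0 : 0 < x) (hx1 : x ≤ 1)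
    (hα1 : 1 ≤ α) (hα2 : α ≤ 2) (hK : 0 < K) :
    x ^ 2 * |1 / x - 1| ^ α
      ≤ (2 - α) * K ^ (α - 1) * (x * (1 - x)) + (α - 1) * K ^ (α - 2) * (1 - x) ^ 2 := by
  set u := 1 / x - 1 with hu_def
  have hu : 0 ≤ u := by
    have : 1 ≤ 1 / x := one_le_one_div hx0 hx1
    linarith
  have hxu : x * u = 1 - x := by
    rw [hu_def]
    field_simp
  have hsplit : u ^ α = u ^ (α - 1) * u := by
    conv_lhs => rw [show α = (α - 1) + 1 by ring]
    rw [Real.rpow_add' hu (by linarith), Real.rpow_one]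
  have htangent := Real.rpow_le_tangent (u := u) (by linarith : 0 ≤ α - 1) (by linarith) hK hu
  rw [show 1 - (α - 1) = 2 - α by ring, show α - 1 - 1 = α - 2 by ring] at htangent
  have hw : 0 ≤ x * (1 - x) := mul_nonneg hx0.le (by linarith)
  calc x ^ 2 * |u| ^ α = x * (1 - x) * u ^ (α - 1) := by
        rw [abs_of_nonneg hu, hsplit, ← hxu]
        ring
    _ ≤ x * (1 - x) * ((2 - α) * K ^ (α - 1) + (α - 1) * K ^ (α - 2) * u) := by gcongr
    _ = (2 - α) * K ^ (α - 1) * (x * (1 - x)) + (α - 1) * K ^ (α - 2) * (1 - x) ^ 2 := by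
        rw [← hxu]
        ring

section ProbabilityVector

variable {ι : Type*} [Fintype ι] {p : ι → ℝ}

lemma sum_mul_one_sub_eq (hsum : ∑ i, p i = 1) :
    ∑ i, p i * (1 - p i) = 1 - ∑ i, p i ^ 2 := by
  simp only [mul_sub, mul_one, ← sq, sum_sub_distrib, hsum]

lemma sum_one_sub_sq_eq (hsum : ∑ i, p i = 1) :
    ∑ i, (1 - p i) ^ 2 = Fintype.card ι - 2 + ∑ i, p i ^ 2 := by
  simp only [sub_sq, one_pow, mul_one, sum_add_distrib, sum_sub_distrib, ← mul_sum, hsum,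
    sum_const, card_univ, nsmul_eq_mul]

lemma sum_sq_mul_abs_one_div_sub_one_rpow_sub_one_le (hp : ∀ i, 0 < p i)
    (hsum : ∑ i, p i = 1) {α K : ℝ} (hα1 : 1 ≤ α) (hα2 : α ≤ 2) (hK : 0 < K) :
    ∑ i, p i ^ 2 * (|1 / p i - 1| ^ α - 1)
      ≤ (2 - α) * K ^ (α - 1) * (1 - ∑ i, p i ^ 2)
        + (α - 1) * K ^ (α - 2) * (Fintype.card ι - 2 + ∑ i, p i ^ 2) - ∑ i, p i ^ 2 := by
  have hp1 (i : ι) : p i ≤ 1 :=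
    hsum ▸ single_le_sum (fun j _ => (hp j).le) (mem_univ i)
  rw [← sum_mul_one_sub_eq hsum, ← sum_one_sub_sq_eq hsum, mul_sum, mul_sum, ← sum_add_distrib,
    ← sum_sub_distrib]
  gcongr with i
  have := sq_mul_abs_one_div_sub_one_rpow_le (hp i) (hp1 i) hα1 hα2 hK
  linarith

lemma one_div_card_le_sum_sq (hsum : ∑ i, p i = 1) :
    1 / (Fintype.card ι : ℝ) ≤ ∑ i, p i ^ 2 := by
  have hcs := sq_sum_le_card_mul_sum_sq (s := (univ : Finset ι)) (f := p)
  rw [hsum, card_univ, one_pow] at hcs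
  have hcard : (0 : ℝ) < Fintype.card ι := by
    by_contra! h
    nlinarith [sum_nonneg fun i (_ : i ∈ univ) => sq_nonneg (p i)]
  rw [div_le_iff₀ hcard]
  linarith

end ProbabilityVector

lemma tangent_bound_le_of_one_div_le {m s α : ℝ} (hm : 2 ≤ m) (hα1 : 1 ≤ α) (hα2 : α ≤ 2)
    (hs : 1 / m ≤ s) :
    1 + ((2 - α) * (m - 1) ^ (α - 1) * (1 - s) + (α - 1) * (m - 1) ^ (α - 2) * (m - 2 + s) - s)
      ≤ (m - 1) / m * ((m - 1) ^ (α - 1) + 1) := by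
  set K := m - 1 with hK_def
  have hK : 1 ≤ K := by linarith
  have hA : 0 ≤ K ^ (α - 1) := Real.rpow_nonneg (by linarith) _
  have hB : K ^ (α - 2) ≤ 1 := Real.rpow_le_one_of_one_le_of_nonpos hK (by linarith)
  have hBK : K ^ (α - 2) * K = K ^ (α - 1) := by
    rw [show α - 1 = (α - 2) + 1 by ring, Real.rpow_add_one (by linarith)]
  have hslope : 0 ≤ 1 + (2 - α) * K ^ (α - 1) - (α - 1) * K ^ (α - 2) := by
    nlinarith [mul_nonneg (by linarith : (0 : ℝ) ≤ 2 - α) hA]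
  have hm0 : m ≠ 0 := by linarith
  have hgap : (m - 1) / m * ((m - 1) ^ (α - 1) + 1)
      - (1 + ((2 - α) * K ^ (α - 1) * (1 - s) + (α - 1) * K ^ (α - 2) * (m - 2 + s) - s))
      = (s - 1 / m) * (1 + (2 - α) * K ^ (α - 1) - (α - 1) * K ^ (α - 2)) := by
    rw [← hBK, hK_def]
    field_simp
    ring
  linarith [mul_nonneg (sub_nonneg.mpr hs) hslope]

lemma one_add_sum_eq_of_uniform (m : ℕ) (hm : 1 ≤ m) (p : Fin m → ℝ) {α : ℝ} (hα : α ≠ 0)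
    (hpu : ∀ i, p i = 1 / m) :
    1 + ∑ i, (p i) ^ 2 * (|1 / p i - 1| ^ α - 1)
      = ((m : ℝ) - 1) / m * (((m : ℝ) - 1) ^ (α - 1) + 1) := by
  have hm1 : (1 : ℝ) ≤ m := by exact_mod_cast hm
  have hsplit : ((m : ℝ) - 1) ^ α = ((m : ℝ) - 1) ^ (α - 1) * ((m : ℝ) - 1) := by
    conv_lhs => rw [show α = (α - 1) + 1 by ring]
    rw [Real.rpow_add' (by linarith) (by simpa using hα), Real.rpow_one]
  simp only [hpu, one_div_one_div, abs_of_nonneg (by linarith : (0 : ℝ) ≤ m - 1), sum_const,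
    card_univ, Fintype.card_fin, nsmul_eq_mul, hsplit]
  field_simp
  ring

/-- For a probability vector `p` with positive entries and `1 ≤ α ≤ 2`,
`1 + Σᵢ pᵢ²(|1/pᵢ − 1|^α − 1) ≤ ((m−1)/m)((m−1)^{α−1} + 1)`,
with equality when `p` is uniform. -/
theorem stmt9 (m : ℕ) (hm : 1 ≤ m) (p : Fin m → ℝ) (hp : ∀ i, 0 < p i)
    (hsum : ∑ i, p i = 1) (α : ℝ) (hα1 : 1 ≤ α) (hα2 : α ≤ 2) :
    (1 + ∑ i, (p i) ^ 2 * (|1 / p i - 1| ^ α - 1)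
        ≤ ((m : ℝ) - 1) / m * (((m : ℝ) - 1) ^ (α - 1) + 1)) ∧
      ((∀ i, p i = 1 / m) →
        1 + ∑ i, (p i) ^ 2 * (|1 / p i - 1| ^ α - 1)
          = ((m : ℝ) - 1) / m * (((m : ℝ) - 1) ^ (α - 1) + 1)) := by
  have hα0 : α ≠ 0 := by linarith
  refine ⟨?_, one_add_sum_eq_of_uniform m hm p hα0⟩
  rcases hm.eq_or_lt with rfl | hm2
  · refine (one_add_sum_eq_of_uniform 1 le_rfl p hα0 fun i => ?_).le
    simpa [Subsingleton.elim i 0] using hsum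
  · have hmR : (2 : ℝ) ≤ m := by exact_mod_cast hm2
    have hs := one_div_card_le_sum_sq hsum
    rw [Fintype.card_fin] at hs
    calc _ ≤ 1 + ((2 - α) * ((m : ℝ) - 1) ^ (α - 1) * (1 - ∑ i, p i ^ 2)
            + (α - 1) * ((m : ℝ) - 1) ^ (α - 2) * (m - 2 + ∑ i, p i ^ 2) - ∑ i, p i ^ 2) := by
          gcongr
          simpa using sum_sq_mul_abs_one_div_sub_one_rpow_sub_one_le hp hsum hα1 hα2
            (K := (m : ℝ) - 1) (by linarith)
      _ ≤ _ := tangent_bound_le_of_one_div_le hmR hα1 hα2 hs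
end

section
/- Let P, Q be probability measures with P ≪ Q, let α ≥ 1 and β its conjugate exponent (1/α + 1/β = 1), and let f be measurable with E_Q|f|^β < ∞ and f integrable under P and Q. Then E_P[f] − E_Q[f] − (1/β) E_Q|f|^β ≤ (1/α) ∫ |dP/dQ − 1|^α dQ. -/
/-!
Write `g = dP/dQ`. Then `E_P[f] − E_Q[f] = ∫ f (g − 1) dQ`, and Young's inequality
`f (g − 1) ≤ |g − 1|^α / α + |f|^β / β` integrates to the claim. When `∫ |g − 1|^α dQ` is
infinite the right-hand side is `∞` and there is nothing to prove.
-/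

open MeasureTheory Real
open scoped ENNReal

namespace MeasureTheory

variable {Ω : Type*} [MeasurableSpace Ω] {μ ν : Measure Ω}

theorem integral_mul_le_of_holderConjugate {p q : ℝ} (hpq : p.HolderConjugate q) {g f : Ω → ℝ}
    (hgf : Integrable (fun ω => g ω * f ω) ν) (hg : Integrable (fun ω => |g ω| ^ p) ν)
    (hf : Integrable (fun ω => |f ω| ^ q) ν) :
    ∫ ω, g ω * f ω ∂ν ≤ 1 / p * ∫ ω, |g ω| ^ p ∂ν + 1 / q * ∫ ω, |f ω| ^ q ∂ν := by
  calc ∫ ω, g ω * f ω ∂ν ≤ ∫ ω, (|g ω| ^ p / p + |f ω| ^ q / q) ∂ν :=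
        integral_mono hgf ((hg.div_const p).add (hf.div_const q))
          fun ω => young_inequality (g ω) (f ω) hpq
    _ = 1 / p * ∫ ω, |g ω| ^ p ∂ν + 1 / q * ∫ ω, |f ω| ^ q ∂ν := by
        rw [integral_add (hg.div_const p) (hf.div_const q), integral_div, integral_div]
        ring

variable [Measure.HaveLebesgueDecomposition μ ν] [SigmaFinite μ] {f : Ω → ℝ}

theorem integral_sub_integral_eq_integral_rnDeriv_sub_one_mul (hμν : μ ≪ ν)
    (hfμ : Integrable f μ) (hfν : Integrable f ν) :
    ∫ ω, f ω ∂μ - ∫ ω, f ω ∂ν = ∫ ω, ((μ.rnDeriv ν ω).toReal - 1) * f ω ∂ν := by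
  rw [← integral_rnDeriv_smul hμν, ← integral_sub ((integrable_rnDeriv_smul_iff hμν).mpr hfμ) hfν]
  simp only [smul_eq_mul, sub_mul, one_mul]

theorem integrable_rnDeriv_sub_one_mul (hμν : μ ≪ ν) (hfμ : Integrable f μ)
    (hfν : Integrable f ν) : Integrable (fun ω => ((μ.rnDeriv ν ω).toReal - 1) * f ω) ν :=
  (((integrable_rnDeriv_smul_iff hμν).mpr hfμ).sub hfν).congr
    (.of_forall fun ω => by simp only [Pi.sub_apply, smul_eq_mul, sub_mul, one_mul])

theorem integral_sub_integral_sub_le_integral_abs_rnDeriv_sub_one_rpow (hμν : μ ≪ ν)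
    {p q : ℝ} (hpq : p.HolderConjugate q) (hfμ : Integrable f μ) (hfν : Integrable f ν)
    (hf : Integrable (fun ω => |f ω| ^ q) ν)
    (hg : Integrable (fun ω => |(μ.rnDeriv ν ω).toReal - 1| ^ p) ν) :
    ∫ ω, f ω ∂μ - ∫ ω, f ω ∂ν - 1 / q * ∫ ω, |f ω| ^ q ∂ν
      ≤ 1 / p * ∫ ω, |(μ.rnDeriv ν ω).toReal - 1| ^ p ∂ν := by
  rw [integral_sub_integral_eq_integral_rnDeriv_sub_one_mul hμν hfμ hfν]
  linarith [integral_mul_le_of_holderConjugate hpq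
    (integrable_rnDeriv_sub_one_mul hμν hfμ hfν) hg hf]

end MeasureTheory

theorem stmt10_general {Ω : Type*} [MeasurableSpace Ω] (P Q : Measure Ω)
    [IsProbabilityMeasure P] [IsProbabilityMeasure Q] (hPQ : P ≪ Q)
    (α β : ℝ) (hα : 1 < α) (hconj : 1 / α + 1 / β = 1)
    (f : Ω → ℝ)
    (hfP : Integrable f P) (hfQ : Integrable f Q)
    (hfβ : Integrable (fun ω => |f ω| ^ β) Q) :
    ENNReal.ofReal (∫ ω, f ω ∂P - ∫ ω, f ω ∂Q - (1 / β) * ∫ ω, |f ω| ^ β ∂Q)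
      ≤ ENNReal.ofReal (1 / α) *
        ∫⁻ ω, ENNReal.ofReal (|(P.rnDeriv Q ω).toReal - 1| ^ α) ∂Q := by
  have hαβ : α.HolderConjugate β :=
    holderConjugate_iff.mpr ⟨hα, by simpa only [one_div] using hconj⟩
  set h := fun ω => |(P.rnDeriv Q ω).toReal - 1| ^ α
  have h_nonneg : 0 ≤ᵐ[Q] h := .of_forall fun ω => rpow_nonneg (abs_nonneg _) α
  by_cases h_top : ∫⁻ ω, ENNReal.ofReal (h ω) ∂Q = ∞
  · rw [h_top, ENNReal.mul_top (by simpa using hαβ.pos)]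
    exact le_top
  have h_meas : Measurable h :=
    (((Measure.measurable_rnDeriv P Q).ennreal_toReal.sub_const 1).abs).pow_const α
  have h_int : Integrable h Q :=
    (lintegral_ofReal_ne_top_iff_integrable h_meas.aestronglyMeasurable h_nonneg).mp h_top
  rw [← ofReal_integral_eq_lintegral_ofReal h_int h_nonneg, ← ENNReal.ofReal_mul (by positivity)]
  exact ENNReal.ofReal_le_ofReal
    (integral_sub_integral_sub_le_integral_abs_rnDeriv_sub_one_rpow hPQ hαβ hfP hfQ hfβ h_int)

/-- Variational lower bound on the `φ_α`-divergence: for `P ≪ Q`, conjugate exponents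
`α, β` and `f` with `E_Q|f|^β < ∞`,
`E_P[f] − E_Q[f] − (1/β)E_Q|f|^β ≤ (1/α)∫|dP/dQ − 1|^α dQ`
(the right-hand side taken in `[0,∞]`). -/
theorem stmt10 {Ω : Type*} [MeasurableSpace Ω] (P Q : Measure Ω)
    [IsProbabilityMeasure P] [IsProbabilityMeasure Q] (hPQ : P ≪ Q)
    (α β : ℝ) (hα : 1 < α) (hconj : 1 / α + 1 / β = 1)
    (f : Ω → ℝ) (hfmeas : Measurable f)
    (hfP : Integrable f P) (hfQ : Integrable f Q)
    (hfβ : Integrable (fun ω => |f ω| ^ β) Q) :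
    ENNReal.ofReal (∫ ω, f ω ∂P - ∫ ω, f ω ∂Q - (1 / β) * ∫ ω, |f ω| ^ β ∂Q)
      ≤ ENNReal.ofReal (1 / α) *
        ∫⁻ ω, ENNReal.ofReal (|(P.rnDeriv Q ω).toReal - 1| ^ α) ∂Q :=
  stmt10_general P Q hPQ α β hα hconj f hfP hfQ hfβ
end

section
/- Let P, Q be probability measures with P ≪ Q and let φ: ℝ_{≥0} → ℝ be convex with φ(1) = 0 and convex conjugate φ*. For any measurable f such that φ*(f) is Q-integrable and f is P-integrable, D_φ(P‖Q) ≥ E_P[f] − E_Q[φ*(f)]. -/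
/-!
Fenchel–Young: `x * y - φ x ≤ φ* y` for every `x ≥ 0`. Taking `x = dP/dQ (ω)` and `y = f ω`,
integrating against `Q`, and using `E_P[f] = E_Q[(dP/dQ) f]` gives the bound.
-/

open MeasureTheory Real
open scoped ENNReal

lemma mul_sub_le_of_isLUB_conjugate {φ : ℝ → ℝ} {x y c : ℝ} (hx : 0 ≤ x)
    (hc : IsLUB {z : ℝ | ∃ x ∈ Set.Ici (0 : ℝ), z = x * y - φ x} c) :
    x * y - φ x ≤ c :=
  hc.1 ⟨x, hx, rfl⟩

theorem integral_sub_integral_le_integral_rnDeriv {Ω : Type*} [MeasurableSpace Ω]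
    {μ ν : Measure Ω} [μ.HaveLebesgueDecomposition ν] [SigmaFinite μ] (hμν : μ ≪ ν)
    {φ g : ℝ → ℝ} {f : Ω → ℝ} (hyoung : ∀ x, 0 ≤ x → ∀ ω, x * f ω - φ x ≤ g (f ω))
    (hf : Integrable f μ) (hg : Integrable (fun ω => g (f ω)) ν)
    (hφ : Integrable (fun ω => φ (μ.rnDeriv ν ω).toReal) ν) :
    ∫ ω, f ω ∂μ - ∫ ω, g (f ω) ∂ν ≤ ∫ ω, φ (μ.rnDeriv ν ω).toReal ∂ν := by
  have hdf : Integrable (fun ω => (μ.rnDeriv ν ω).toReal * f ω) ν :=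
    (integrable_toReal_rnDeriv_mul_iff hμν).mpr hf
  rw [← integral_toReal_rnDeriv_mul hμν, ← integral_sub hdf hg]
  refine integral_mono (hdf.sub hg) hφ fun ω => ?_
  have := hyoung (μ.rnDeriv ν ω).toReal ENNReal.toReal_nonneg ω
  dsimp only [Pi.sub_apply]
  linarith

theorem stmt11_general {Ω : Type*} [MeasurableSpace Ω] (P Q : Measure Ω)
    [IsProbabilityMeasure P] [IsProbabilityMeasure Q] (hPQ : P ≪ Q)
    (φ : ℝ → ℝ)
    (f : Ω → ℝ)
    (g : ℝ → ℝ)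
    (hg : ∀ y ∈ Set.range f,
      IsLUB {z : ℝ | ∃ x ∈ Set.Ici (0 : ℝ), z = x * y - φ x} (g y))
    (hfP : Integrable f P)
    (hgf : Integrable (fun ω => g (f ω)) Q)
    (hφint : Integrable (fun ω => φ ((P.rnDeriv Q ω).toReal)) Q) :
    ∫ ω, f ω ∂P - ∫ ω, g (f ω) ∂Q ≤ ∫ ω, φ ((P.rnDeriv Q ω).toReal) ∂Q :=
  integral_sub_integral_le_integral_rnDeriv hPQ
    (fun _ hx ω => mul_sub_le_of_isLUB_conjugate hx (hg (f ω) ⟨ω, rfl⟩)) hfP hgf hφint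

/-- Variational representation (lower bound) of the `φ`-divergence: for convex `φ` with
`φ(1) = 0` and `g` the convex conjugate of `φ` (restricted to `ℝ_{≥0}`) on the values
taken by `f`, `D_φ(P‖Q) = ∫ φ(dP/dQ) dQ ≥ E_P[f] − E_Q[g ∘ f]` whenever `g ∘ f` is
`Q`-integrable and `f` is `P`-integrable. -/
theorem stmt11 {Ω : Type*} [MeasurableSpace Ω] (P Q : Measure Ω)
    [IsProbabilityMeasure P] [IsProbabilityMeasure Q] (hPQ : P ≪ Q)
    (φ : ℝ → ℝ) (hφconv : ConvexOn ℝ (Set.Ici (0 : ℝ)) φ) (hφ1 : φ 1 = 0)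
    (f : Ω → ℝ) (hfmeas : Measurable f)
    (g : ℝ → ℝ)
    (hg : ∀ y ∈ Set.range f,
      IsLUB {z : ℝ | ∃ x ∈ Set.Ici (0 : ℝ), z = x * y - φ x} (g y))
    (hfP : Integrable f P)
    (hgf : Integrable (fun ω => g (f ω)) Q)
    (hφint : Integrable (fun ω => φ ((P.rnDeriv Q ω).toReal)) Q) :
    ∫ ω, f ω ∂P - ∫ ω, g (f ω) ∂Q ≤ ∫ ω, φ ((P.rnDeriv Q ω).toReal) ∂Q :=
  stmt11_general P Q hPQ φ f g hg hfP hgf hφint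
end

section
/- Let T be a random variable taking values in {1,…,n} and φ = (φ₁,…,φₙ) a random vector with E[φᵢ] = μᵢ and ‖φᵢ − μᵢ‖_β ≤ σᵢ, where 2 < β ≤ ∞ and 1/α + 1/β = 1. Assume T and φ are discrete. Then |E[φ_T − μ_T]| ≤ 2^{1/α} · (E_T[σ_T^β])^{1/β} · n^{1/β}. -/
/-!
Split the integral along the fibres `{T = i}` and put `pᵢ = P(T = i)`. On each fibre, Hölder's
inequality with exponents `β` and `α` for the restricted measure gives
`|E[φᵢ - mᵢ; T = i]| ≤ σᵢ pᵢ^{1/α}`. Writing `σᵢ pᵢ^{1/α} = (σᵢ pᵢ^{1/β}) · pᵢ^{1/α - 1/β}`, the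
discrete Hölder inequality bounds the sum by `(∑ pᵢ σᵢ^β)^{1/β} (∑ pᵢ^θ)^{1/α}` with
`θ = 1 - α/β`, which lies in `[0, 1]` because `β ≥ 2`; concavity of `t ↦ t^θ` then gives
`∑ pᵢ^θ ≤ n^{1-θ}`, and `n^{(1-θ)/α} = n^{1/β}`.
-/

open MeasureTheory Real Finset

section

variable {Ω E : Type*} [MeasurableSpace Ω] {μ : Measure Ω} [NormedAddCommGroup E] [NormedSpace ℝ E]

theorem integral_comp_eq_sum_setIntegral {ι : Type*} [Fintype ι] [MeasurableSpace ι]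
    [MeasurableSingletonClass ι] {T : Ω → ι} (hT : Measurable T) {f : ι → Ω → E}
    (hf : ∀ i, Integrable (f i) μ) :
    ∫ ω, f (T ω) ω ∂μ = ∑ i, ∫ ω in {ω | T ω = i}, f i ω ∂μ := by
  have hmeas i : MeasurableSet {ω | T ω = i} := hT (measurableSet_singleton i)
  have hfiber i : Set.EqOn (fun ω ↦ f (T ω) ω) (f i) {ω | T ω = i} := fun ω hω ↦ by
    simp only [hω.out]
  calc ∫ ω, f (T ω) ω ∂μ = ∫ ω in ⋃ i, {ω | T ω = i}, f (T ω) ω ∂μ := by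
        rw [Set.iUnion_eq_univ_iff.mpr fun ω ↦ ⟨T ω, rfl⟩, Measure.restrict_univ]
    _ = ∑ i, ∫ ω in {ω | T ω = i}, f (T ω) ω ∂μ :=
        integral_iUnion_fintype hmeas (pairwise_disjoint_fiber T)
          fun i ↦ (hf i).integrableOn.congr_fun (hfiber i).symm (hmeas i)
    _ = ∑ i, ∫ ω in {ω | T ω = i}, f i ω ∂μ :=
        sum_congr rfl fun i _ ↦ setIntegral_congr_fun (hmeas i) (hfiber i)

theorem norm_setIntegral_le_of_integrable_norm_rpow [IsFiniteMeasure μ] {α β : ℝ}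
    (hαβ : β.HolderConjugate α) {f : Ω → E} (hf : AEStronglyMeasurable f μ)
    (hfβ : Integrable (fun ω ↦ ‖f ω‖ ^ β) μ) (A : Set Ω) :
    ‖∫ ω in A, f ω ∂μ‖ ≤ (∫ ω, ‖f ω‖ ^ β ∂μ) ^ (1 / β) * μ.real A ^ (1 / α) := by
  have hfLp : MemLp f (ENNReal.ofReal β) μ :=
    (integrable_norm_rpow_iff hf (ENNReal.ofReal_pos.mpr hαβ.pos).ne' ENNReal.ofReal_ne_top).mp
      (by rwa [ENNReal.toReal_ofReal hαβ.nonneg])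
  calc ‖∫ ω in A, f ω ∂μ‖ ≤ ∫ ω in A, ‖f ω‖ * 1 ∂μ := by
        simpa using norm_integral_le_integral_norm f
    _ ≤ (∫ ω in A, ‖f ω‖ ^ β ∂μ) ^ (1 / β) * (∫ ω in A, (1 : ℝ) ^ α ∂μ) ^ (1 / α) :=
        integral_mul_le_Lp_mul_Lq_of_nonneg hαβ (ae_of_all _ fun ω ↦ norm_nonneg _)
          (ae_of_all _ fun _ ↦ zero_le_one) (hfLp.restrict A).norm (memLp_const 1)
    _ = (∫ ω in A, ‖f ω‖ ^ β ∂μ) ^ (1 / β) * μ.real A ^ (1 / α) := by simp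
    _ ≤ (∫ ω, ‖f ω‖ ^ β ∂μ) ^ (1 / β) * μ.real A ^ (1 / α) := by
        gcongr ?_ ^ _ * _
        · exact hαβ.one_div_nonneg
        · exact setIntegral_le_integral hfβ (ae_of_all _ fun ω ↦ by positivity)

end

theorem Finset.sum_rpow_le_card_rpow_mul_rpow_sum {ι : Type*} (s : Finset ι) {p : ι → ℝ}
    (hp : ∀ i, 0 ≤ p i) {θ : ℝ} (hθ₀ : 0 ≤ θ) (hθ₁ : θ ≤ 1) :
    ∑ i ∈ s, p i ^ θ ≤ (#s : ℝ) ^ (1 - θ) * (∑ i ∈ s, p i) ^ θ := by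
  rcases hθ₀.eq_or_lt with rfl | hθ₀
  · simp
  have hθ : 1 ≤ θ⁻¹ := one_le_inv₀ hθ₀ |>.mpr hθ₁
  have := inner_le_weight_mul_Lp_of_nonneg s hθ (fun _ ↦ 1) (fun i ↦ p i ^ θ)
    (fun _ ↦ zero_le_one) (fun i ↦ rpow_nonneg (hp i) θ)
  simpa [← rpow_mul (hp _), hθ₀.ne'] using this

theorem Finset.sum_mul_rpow_le_rpow_sum_mul_card_rpow {ι : Type*} (s : Finset ι) {p σ : ι → ℝ}
    (hp : ∀ i, 0 ≤ p i) (hσ : ∀ i, 0 ≤ σ i) (hp₁ : ∑ i ∈ s, p i ≤ 1) {α β : ℝ}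
    (hαβ : β.HolderConjugate α) (hβ : 2 ≤ β) :
    ∑ i ∈ s, σ i * p i ^ (1 / α) ≤ (∑ i ∈ s, p i * σ i ^ β) ^ (1 / β) * (#s : ℝ) ^ (1 / β) := by
  have hα := hαβ.symm.pos
  have hβ₀ := hαβ.pos
  have hαβ₁ : 1 / β + 1 / α = 1 := by simpa using hαβ.inv_add_inv_eq_one
  set θ := 1 - α / β with hθ
  have hθ₀ : 0 ≤ θ := by
    have : 1 / β ≤ 1 / 2 := one_div_le_one_div_of_le two_pos hβ
    rw [hθ, sub_nonneg, div_le_one hβ₀, ← one_div_le_one_div hβ₀ hα]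
    linarith
  have hθ₁ : θ ≤ 1 := by have := div_pos hα hβ₀; linarith
  have hpθ : (∑ i ∈ s, p i ^ θ) ^ (1 / α) ≤ (#s : ℝ) ^ (1 / β) := calc
    _ ≤ ((#s : ℝ) ^ (1 - θ) * 1) ^ (1 / α) := by
      gcongr
      · exact sum_nonneg fun i _ ↦ rpow_nonneg (hp i) θ
      refine (sum_rpow_le_card_rpow_mul_rpow_sum s hp hθ₀ hθ₁).trans ?_
      gcongr
      exact rpow_le_one (sum_nonneg fun i _ ↦ hp i) hp₁ hθ₀
    _ = (#s : ℝ) ^ (1 / β) := by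
      rw [mul_one, ← rpow_mul (Nat.cast_nonneg _), hθ]
      congr 1
      field_simp
      ring
  have hsplit : ∀ i, σ i * p i ^ (1 / α) = (σ i * p i ^ (1 / β)) * p i ^ (1 / α - 1 / β) := by
    intro i
    rw [mul_assoc, ← rpow_add' (hp i) (by simp [hα.ne'])]
    ring_nf
  have hpow : ∀ i, (σ i * p i ^ (1 / β)) ^ β = p i * σ i ^ β := by
    intro i
    rw [mul_rpow (hσ i) (rpow_nonneg (hp i) _), ← rpow_mul (hp i), one_div_mul_cancel hβ₀.ne',
      rpow_one, mul_comm]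
  have hpow' : ∀ i, (p i ^ (1 / α - 1 / β)) ^ α = p i ^ θ := by
    intro i
    rw [← rpow_mul (hp i), hθ]
    congr 1
    field_simp
  calc ∑ i ∈ s, σ i * p i ^ (1 / α)
      = ∑ i ∈ s, (σ i * p i ^ (1 / β)) * p i ^ (1 / α - 1 / β) := sum_congr rfl fun i _ ↦ hsplit i
    _ ≤ (∑ i ∈ s, (σ i * p i ^ (1 / β)) ^ β) ^ (1 / β)
          * (∑ i ∈ s, (p i ^ (1 / α - 1 / β)) ^ α) ^ (1 / α) :=
        inner_le_Lp_mul_Lq_of_nonneg s hαβ (fun i _ ↦ by have := hσ i; have := hp i; positivity)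
          (fun i _ ↦ rpow_nonneg (hp i) _)
    _ ≤ (∑ i ∈ s, p i * σ i ^ β) ^ (1 / β) * (#s : ℝ) ^ (1 / β) := by
        simp only [hpow, hpow']
        gcongr
        exact rpow_nonneg (sum_nonneg fun i _ ↦ mul_nonneg (hp i) (rpow_nonneg (hσ i) β)) _

theorem stmt15_general {Ω : Type*} [MeasurableSpace Ω] (μ : Measure Ω) [IsProbabilityMeasure μ]
    {n : ℕ} (T : Ω → Fin n) (hT : Measurable T)
    (φ : Fin n → Ω → ℝ)
    (m σ : Fin n → ℝ) (hσ : ∀ i, 0 ≤ σ i)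
    (α β : ℝ) (hβ : 2 < β) (hconj : 1 / α + 1 / β = 1)
    (hφint : ∀ i, Integrable (φ i) μ)
    (hβint : ∀ i, Integrable (fun ω => |φ i ω - m i| ^ β) μ)
    (hnorm : ∀ i, (∫ ω, |φ i ω - m i| ^ β ∂μ) ^ (1 / β) ≤ σ i) :
    |∫ ω, (φ (T ω) ω - m (T ω)) ∂μ|
      ≤ 2 ^ (1 / α) * (∑ i, (μ {ω | T ω = i}).toReal * σ i ^ β) ^ (1 / β)
          * (n : ℝ) ^ (1 / β) := by
  have hαβ : β.HolderConjugate α :=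
    Real.holderConjugate_iff.mpr ⟨by linarith, by simpa [one_div, add_comm] using hconj⟩
  set p : Fin n → ℝ := fun i ↦ μ.real {ω | T ω = i}
  have hp₁ : ∑ i, p i ≤ 1 :=
    (sum_measureReal_preimage_singleton univ fun i _ ↦ hT (measurableSet_singleton i)).trans_le
      (by simp)
  have hfibre i : |∫ ω in {ω | T ω = i}, φ i ω - m i ∂μ| ≤ σ i * p i ^ (1 / α) := by
    have := norm_setIntegral_le_of_integrable_norm_rpow (f := fun ω ↦ φ i ω - m i) hαβ
      ((hφint i).sub (integrable_const _)).aestronglyMeasurable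
      (by simpa only [Real.norm_eq_abs] using hβint i) {ω | T ω = i}
    simp only [Real.norm_eq_abs] at this
    exact this.trans (by gcongr; exact hnorm i)
  have hdecomp := integral_comp_eq_sum_setIntegral (μ := μ) hT (f := fun i ω ↦ φ i ω - m i)
    fun i ↦ (hφint i).sub (integrable_const _)
  calc |∫ ω, (φ (T ω) ω - m (T ω)) ∂μ|
      = |∑ i, ∫ ω in {ω | T ω = i}, φ i ω - m i ∂μ| := congrArg abs hdecomp
    _ ≤ ∑ i, |∫ ω in {ω | T ω = i}, φ i ω - m i ∂μ| := abs_sum_le_sum_abs _ _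
    _ ≤ ∑ i, σ i * p i ^ (1 / α) := sum_le_sum fun i _ ↦ hfibre i
    _ ≤ (∑ i, p i * σ i ^ β) ^ (1 / β) * (n : ℝ) ^ (1 / β) := by
        simpa using sum_mul_rpow_le_rpow_sum_mul_card_rpow univ (fun i ↦ measureReal_nonneg) hσ
          hp₁ hαβ hβ.le
    _ ≤ 2 ^ (1 / α) * (∑ i, p i * σ i ^ β) ^ (1 / β) * (n : ℝ) ^ (1 / β) := by
        have hsum : 0 ≤ ∑ i, p i * σ i ^ β :=
          sum_nonneg fun i _ ↦ mul_nonneg measureReal_nonneg (rpow_nonneg (hσ i) β)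
        rw [mul_assoc]
        exact le_mul_of_one_le_left (by positivity)
          (one_le_rpow one_le_two hαβ.symm.one_div_nonneg)

/-- Exploration-bias bound for finite `β`-norms: if `‖φᵢ − μᵢ‖_β ≤ σᵢ` with `2 < β` and
`1/α + 1/β = 1`, then `|E[φ_T − μ_T]| ≤ 2^{1/α} (E_T[σ_T^β])^{1/β} n^{1/β}`,
where `E_T[σ_T^β] = Σᵢ P(T = i) σᵢ^β`. -/
theorem stmt15 {Ω : Type*} [MeasurableSpace Ω] (μ : Measure Ω) [IsProbabilityMeasure μ]
    {n : ℕ} (hn : 0 < n) (T : Ω → Fin n) (hT : Measurable T)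
    (φ : Fin n → Ω → ℝ) (hφmeas : ∀ i, Measurable (φ i))
    (m σ : Fin n → ℝ) (hσ : ∀ i, 0 ≤ σ i)
    (α β : ℝ) (hβ : 2 < β) (hconj : 1 / α + 1 / β = 1)
    (hφint : ∀ i, Integrable (φ i) μ)
    (hm : ∀ i, m i = ∫ ω, φ i ω ∂μ)
    (hβint : ∀ i, Integrable (fun ω => |φ i ω - m i| ^ β) μ)
    (hnorm : ∀ i, (∫ ω, |φ i ω - m i| ^ β ∂μ) ^ (1 / β) ≤ σ i) :
    |∫ ω, (φ (T ω) ω - m (T ω)) ∂μ|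
      ≤ 2 ^ (1 / α) * (∑ i, (μ {ω | T ω = i}).toReal * σ i ^ β) ^ (1 / β)
          * (n : ℝ) ^ (1 / β) :=
  stmt15_general μ T hT φ m σ hσ α β hβ hconj hφint hβint hnorm
end

section
/- Let T be a random variable taking values in {1,…,n} and φ = (φ₁,…,φₙ) a discrete random vector with E[φᵢ] = μᵢ and E[(φᵢ−μᵢ)²] ≤ σᵢ² for each i. Then |E[φ_T − μ_T]| ≤ (E_T[σ_T²])^{1/2} · √(n−1). -/
open MeasureTheory Real Finset

/-! Write `p i = P(T = i)` and `g i = φ i - m i`. The bias is `∑ i, E[1_{T = i} g i]`, and since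
`g i` is centred, `E[1_{T = i} g i] = E[(1_{T = i} - p i) g i]`. Cauchy–Schwarz bounds this by
`√(p i (1 - p i)) σ i`, the indicator having variance `p i (1 - p i)`. A second Cauchy–Schwarz,
over `i`, gives `√(∑ p i σ i²) √(∑ (1 - p i))`, and `∑ (1 - p i) = n - 1`. -/

section

variable {Ω : Type*} [MeasurableSpace Ω] {μ : Measure Ω}

theorem abs_integral_mul_le_sqrt_mul_sqrt {f g : Ω → ℝ} (hf : MemLp f 2 μ) (hg : MemLp g 2 μ) :
    |∫ ω, f ω * g ω ∂μ| ≤ √(∫ ω, f ω ^ 2 ∂μ) * √(∫ ω, g ω ^ 2 ∂μ) := by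
  have hholder := integral_mul_norm_le_Lp_mul_Lq (f := f) (g := g) Real.HolderConjugate.two_two
    (by rwa [ENNReal.ofReal_ofNat]) (by rwa [ENNReal.ofReal_ofNat])
  simp only [Real.norm_eq_abs, Real.rpow_two, sq_abs, ← Real.sqrt_eq_rpow] at hholder
  calc |∫ ω, f ω * g ω ∂μ| ≤ ∫ ω, |f ω| * |g ω| ∂μ := by
        simpa only [Real.norm_eq_abs, abs_mul] using
          norm_integral_le_integral_norm (fun ω ↦ f ω * g ω)
    _ ≤ _ := hholder

theorem integral_comp_eq_sum_setIntegral_preimage {ι E : Type*} [Fintype ι] [MeasurableSpace ι]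
    [MeasurableSingletonClass ι] [NormedAddCommGroup E] [NormedSpace ℝ E] {T : Ω → ι}
    (hT : Measurable T) {f : ι → Ω → E} (hf : ∀ i, Integrable (f i) μ) :
    ∫ ω, f (T ω) ω ∂μ = ∑ i, ∫ ω in T ⁻¹' {i}, f i ω ∂μ := by
  have hfiber (i : ι) : MeasurableSet (T ⁻¹' {i}) := hT (measurableSet_singleton i)
  have hsum : (fun ω ↦ f (T ω) ω) = fun ω ↦ ∑ i, (T ⁻¹' {i}).indicator (f i) ω := by
    funext ω
    rw [Fintype.sum_eq_single (T ω) fun i hi ↦ Set.indicator_of_notMem (fun h ↦ hi h.symm) _]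
    exact (Set.indicator_of_mem (s := T ⁻¹' {T ω}) rfl _).symm
  rw [hsum, integral_finsetSum _ fun i _ ↦ (hf i).indicator (hfiber i)]
  exact Finset.sum_congr rfl fun i _ ↦ integral_indicator (hfiber i)

variable [IsProbabilityMeasure μ]

theorem integral_indicator_one_sub_measureReal_sq {A : Set Ω} (hA : MeasurableSet A) :
    ∫ ω, (A.indicator 1 ω - μ.real A) ^ 2 ∂μ = μ.real A * (1 - μ.real A) := by
  have hexpand : (fun ω ↦ (A.indicator 1 ω - μ.real A) ^ 2)
      = fun ω ↦ A.indicator 1 ω * (1 - 2 * μ.real A) + μ.real A ^ 2 := by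
    ext ω
    by_cases hω : ω ∈ A <;> simp [hω]; ring
  rw [hexpand, integral_add ((integrable_indicator_iff hA).2 (integrable_const 1).integrableOn
      |>.mul_const _) (integrable_const _), integral_mul_const, integral_indicator_one hA,
    integral_const, probReal_univ, one_smul]
  ring

theorem abs_setIntegral_le_of_integral_eq_zero {A : Set Ω} (hA : MeasurableSet A) {g : Ω → ℝ}
    (hg : MemLp g 2 μ) (hg0 : ∫ ω, g ω ∂μ = 0) :
    |∫ ω in A, g ω ∂μ| ≤ √(μ.real A * (1 - μ.real A)) * √(∫ ω, g ω ^ 2 ∂μ) := by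
  have hgint : Integrable g μ := hg.integrable one_le_two
  have hcentred : ∫ ω in A, g ω ∂μ = ∫ ω, (A.indicator 1 ω - μ.real A) * g ω ∂μ := by
    have hpt : (fun ω ↦ (A.indicator 1 ω - μ.real A) * g ω)
        = fun ω ↦ A.indicator g ω - μ.real A * g ω := by
      funext ω
      by_cases hω : ω ∈ A <;> simp [hω, sub_mul]
    rw [hpt, integral_sub (hgint.indicator hA) (hgint.const_mul _), integral_const_mul, hg0,
      mul_zero, sub_zero, integral_indicator hA]
  have hindicator : MemLp (fun ω ↦ A.indicator 1 ω - μ.real A) 2 μ :=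
    (memLp_indicator_const 2 hA (1 : ℝ) (Or.inr (measure_ne_top μ A))).sub (memLp_const _)
  rw [hcentred, ← integral_indicator_one_sub_measureReal_sq hA]
  exact abs_integral_mul_le_sqrt_mul_sqrt hindicator hg

end

theorem sum_sqrt_mul_one_sub_mul_le {ι : Type*} [Fintype ι] {p s : ι → ℝ}
    (hp : ∀ i, 0 ≤ p i) (hp1 : ∑ i, p i = 1) (hs : ∀ i, 0 ≤ s i) :
    ∑ i, √(p i * (1 - p i)) * s i ≤ √(∑ i, p i * s i ^ 2) * √(Fintype.card ι - 1) := by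
  have hle (i : ι) : p i ≤ 1 := hp1 ▸ single_le_sum (fun j _ ↦ hp j) (mem_univ i)
  calc ∑ i, √(p i * (1 - p i)) * s i = ∑ i, √(p i * s i ^ 2) * √(1 - p i) := by
        refine sum_congr rfl fun i _ ↦ ?_
        rw [sqrt_mul (hp i), sqrt_mul (hp i), sqrt_sq (hs i)]
        ring
    _ ≤ √(∑ i, p i * s i ^ 2) * √(∑ i, (1 - p i)) :=
        sum_sqrt_mul_sqrt_le _ (fun i ↦ mul_nonneg (hp i) (sq_nonneg _)) fun i ↦ sub_nonneg.2 (hle i)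
    _ = √(∑ i, p i * s i ^ 2) * √(Fintype.card ι - 1) := by
        rw [sum_sub_distrib, hp1, sum_const, card_univ, nsmul_one]

theorem stmt16_general {Ω : Type*} [MeasurableSpace Ω] (μ : Measure Ω) [IsProbabilityMeasure μ]
    {n : ℕ} (T : Ω → Fin n) (hT : Measurable T)
    (φ : Fin n → Ω → ℝ)
    (m σ : Fin n → ℝ)
    (hφint : ∀ i, Integrable (φ i) μ)
    (hm : ∀ i, m i = ∫ ω, φ i ω ∂μ)
    (h2int : ∀ i, Integrable (fun ω => (φ i ω - m i) ^ 2) μ)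
    (hvar : ∀ i, ∫ ω, (φ i ω - m i) ^ 2 ∂μ ≤ σ i ^ 2) :
    |∫ ω, (φ (T ω) ω - m (T ω)) ∂μ|
      ≤ (∑ i, (μ {ω | T ω = i}).toReal * σ i ^ 2) ^ (1 / 2 : ℝ)
          * Real.sqrt ((n : ℝ) - 1) := by
  set p : Fin n → ℝ := fun i ↦ μ.real (T ⁻¹' {i})
  have hfiber (i : Fin n) : MeasurableSet (T ⁻¹' {i}) := hT (measurableSet_singleton i)
  have hp1 : ∑ i, p i = 1 := by
    rw [sum_measureReal_preimage_singleton _ fun i _ ↦ hfiber i, coe_univ, Set.preimage_univ,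
      probReal_univ]
  have hcentred (i : Fin n) : ∫ ω, (φ i ω - m i) ∂μ = 0 := by
    rw [integral_sub (hφint i) (integrable_const _), integral_const, probReal_univ, one_smul,
      hm i, sub_self]
  have hL2 (i : Fin n) : MemLp (fun ω ↦ φ i ω - m i) 2 μ :=
    (memLp_two_iff_integrable_sq ((hφint i).sub (integrable_const _)).1).2 (h2int i)
  rw [← sqrt_eq_rpow, integral_comp_eq_sum_setIntegral_preimage hT
    (f := fun i ω ↦ φ i ω - m i) fun i ↦ (hφint i).sub (integrable_const _)]
  calc |∑ i, ∫ ω in T ⁻¹' {i}, (φ i ω - m i) ∂μ|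
      ≤ ∑ i, √(p i * (1 - p i)) * √(∫ ω, (φ i ω - m i) ^ 2 ∂μ) :=
        (abs_sum_le_sum_abs _ _).trans <| sum_le_sum fun i _ ↦
          abs_setIntegral_le_of_integral_eq_zero (hfiber i) (hL2 i) (hcentred i)
    _ ≤ √(∑ i, p i * √(∫ ω, (φ i ω - m i) ^ 2 ∂μ) ^ 2) * √(Fintype.card (Fin n) - 1) :=
        sum_sqrt_mul_one_sub_mul_le (fun _ ↦ measureReal_nonneg) hp1 fun _ ↦ sqrt_nonneg _
    _ ≤ √(∑ i, p i * σ i ^ 2) * √(n - 1) := by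
        have hsq (i : Fin n) : √(∫ ω, (φ i ω - m i) ^ 2 ∂μ) ^ 2 = ∫ ω, (φ i ω - m i) ^ 2 ∂μ :=
          sq_sqrt (integral_nonneg fun _ ↦ sq_nonneg _)
        simp only [hsq, Fintype.card_fin]
        gcongr with i
        exact hvar i

/-- Exploration-bias bound via the χ²-type bound and the cardinality bound
`I₂(T;φ) ≤ n − 1`: if `E[(φᵢ − μᵢ)²] ≤ σᵢ²` then
`|E[φ_T − μ_T]| ≤ (E_T[σ_T²])^{1/2} √(n−1)`. -/
theorem stmt16 {Ω : Type*} [MeasurableSpace Ω] (μ : Measure Ω) [IsProbabilityMeasure μ]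
    {n : ℕ} (hn : 0 < n) (T : Ω → Fin n) (hT : Measurable T)
    (φ : Fin n → Ω → ℝ) (hφmeas : ∀ i, Measurable (φ i))
    (m σ : Fin n → ℝ) (hσ : ∀ i, 0 ≤ σ i)
    (hφint : ∀ i, Integrable (φ i) μ)
    (hm : ∀ i, m i = ∫ ω, φ i ω ∂μ)
    (h2int : ∀ i, Integrable (fun ω => (φ i ω - m i) ^ 2) μ)
    (hvar : ∀ i, ∫ ω, (φ i ω - m i) ^ 2 ∂μ ≤ σ i ^ 2) :
    |∫ ω, (φ (T ω) ω - m (T ω)) ∂μ|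
      ≤ (∑ i, (μ {ω | T ω = i}).toReal * σ i ^ 2) ^ (1 / 2 : ℝ)
          * Real.sqrt ((n : ℝ) - 1) :=
  stmt16_general μ T hT φ m σ hφint hm h2int hvar
end
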